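/- Feasibility of the reduction from OEP to PSP: Let G = (N, E) be a workflow DAG with load times l_i and compute times c_i, and let φ(G) be the PSP instance with projects {a_i, b_i : n_i ∈ N}, profits p(a_i) = −l_i and p(b_i) = l_i − c_i, prerequisites a_i for b_i (for each node n_i) and a_i for b_j (for each edge (n_i, n_j) ∈ E). Then for every prerequisite-closed subset A of projects, the induced state assignment s_A — where s_A(n_i) = S_c if a_i ∈ A and b_i ∈ A, s_A(n_i) = S_l if a_i ∈ A and b_i ∉ A, and s_A(n_i) = S_p if a_i ∉ A — is well-defined (b_i ∈ A implies a_i ∈ A) and satisfies the execution state constraint: for every node n_i with s_A(n_i) = S_c, every parent n_j of n_i has s_A(n_j) ≠ S_p. -/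
import Mathlib


open scoped ENNReal

/-- Operator states: compute, load, prune. -/
inductive NodeState where
  | compute
  | load
  | prune
deriving DecidableEq

/-- In the PSP instance `φ(G)`, projects are `Sum.inl i` (the project `aᵢ`) and
`Sum.inr i` (the project `bᵢ`) for nodes `i` of the workflow DAG.
`prereq parents p q` says that project `p` is a prerequisite of project `q`:
`aᵢ` is a prerequisite of `bᵢ` (for each node `i`), and `aᵢ` is a prerequisite
of `bⱼ` for each edge `(i, j)` (i.e. whenever `i` is a parent of `j`). -/
def prereq {N : Type} [Fintype N] [DecidableEq N] (parents : N → Finset N) :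
    N ⊕ N → N ⊕ N → Prop := fun p q =>
  match p, q with
  | Sum.inl i, Sum.inr j => i = j ∨ i ∈ parents j
  | _, _ => False

/-- A prerequisite-closed set of projects: every prerequisite of every selected
project is also selected. -/
def PrereqClosed {N : Type} [Fintype N] [DecidableEq N] (parents : N → Finset N)
    (A : Finset (N ⊕ N)) : Prop :=
  ∀ p q : N ⊕ N, prereq parents p q → q ∈ A → p ∈ A

/-- The state assignment induced by a project selection `A`:
compute if both `aᵢ` and `bᵢ` are selected, load if only `aᵢ` is selected,
prune if `aᵢ` is not selected. -/
def inducedState {N : Type} [Fintype N] [DecidableEq N] (A : Finset (N ⊕ N))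
    (i : N) : NodeState :=
  if Sum.inl i ∈ A then (if Sum.inr i ∈ A then .compute else .load) else .prune

/-- The execution state constraint: every computed node has no pruned parent. -/
def ExecOK {N : Type} [Fintype N] [DecidableEq N] (parents : N → Finset N)
    (s : N → NodeState) : Prop :=
  ∀ i, s i = NodeState.compute → ∀ j ∈ parents i, s j ≠ NodeState.prune

/-- Profits of the PSP instance `φ(G)`: `p(aᵢ) = -lᵢ` and `p(bᵢ) = lᵢ - cᵢ`
(as extended reals, since load times take values in `ℝ≥0∞`). -/
noncomputable def profit {N : Type} [Fintype N] [DecidableEq N]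
    (l c : N → ℝ≥0∞) : N ⊕ N → EReal := fun x =>
  match x with
  | Sum.inl i => -(l i : EReal)
  | Sum.inr i => (l i : EReal) - (c i : EReal)

/-- Feasibility of the reduction from OEP to PSP: for every
prerequisite-closed subset `A` of projects of `φ(G)`, the induced state
assignment is well-defined (`bᵢ ∈ A` implies `aᵢ ∈ A`) and satisfies the
execution state constraint: every node assigned the compute state has no
parent assigned the prune state. -/
theorem oep_psp_feasible {N : Type} [Fintype N] [DecidableEq N]
    (parents : N → Finset N)
    (acyclic : WellFounded fun i j => i ∈ parents j)
    (l c : N → ℝ≥0∞)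
    (A : Finset (N ⊕ N)) (hA : PrereqClosed parents A) :
    (∀ i : N, Sum.inr i ∈ A → Sum.inl i ∈ A) ∧
    ExecOK parents (inducedState A) := by
  constructor
  · intro i hb
    exact hA (Sum.inl i) (Sum.inr i) (by simp [prereq]) hb
  · intro i hi j hj
    unfold inducedState at hi ⊢
    by_cases hb : Sum.inr i ∈ A
    · have : Sum.inl j ∈ A := hA (Sum.inl j) (Sum.inr i) (Or.inr hj) hb
      simp only [this, if_true]
      split <;> simp
    · by_cases ha : Sum.inl i ∈ A <;> simp [ha, hb] at hi
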